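/- arXiv:math/0702183 — 3 statements merged into one kernel-verified Lean document; each statement's English description precedes it below -/
import Mathlib

section
/- Let m ≥ 3, n ≥ 3, r ∈ (ℤ/nℤ)* with r^m = 1, and t ∈ ℤ/nℤ with t(r-1) = 0. Define the graph Y(m,n;r,t) on vertex set ℤ/mℤ × ℤ/nℤ, with (i,j) adjacent to (i, j + r^i) for all i, to (i+1, j) when i ≠ m-1, and (m-1,j) adjacent to (0, j+t). Then the map σ defined by σ(i,j) = (i+1, rj) for i ≠ m-1 and σ(m-1,j) = (0, rj+t) is an automorphism of Y(m,n;r,t). -/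
/-- The underlying (asymmetric) adjacency relation of the graph `Y(m,n;r,t)`:
`(i,j)` is related to `(i, j + r^i)` for all `i`; to `(i+1, j)` when `i ≠ m-1`;
and `(m-1, j)` is related to `(0, j+t)`.  Here `r^i` is computed with the
representative of `i` in `{0, …, m-1}`. -/
def Yrel (m n : ℕ) (r t : ZMod n) (u v : ZMod m × ZMod n) : Prop :=
  (v.1 = u.1 ∧ v.2 = u.2 + r ^ u.1.val) ∨
  (u.1.val ≠ m - 1 ∧ v.1 = u.1 + 1 ∧ v.2 = u.2) ∨
  (u.1.val = m - 1 ∧ v.1 = 0 ∧ v.2 = u.2 + t)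

/-- The graph `Y(m,n;r,t)`, obtained by symmetrizing `Yrel`. -/
def Ygraph (m n : ℕ) (r t : ZMod n) : SimpleGraph (ZMod m × ZMod n) :=
  SimpleGraph.fromRel (Yrel m n r t)

lemma valEqIff {m : ℕ} (hm : 3 ≤ m) (i : ZMod m) : i.val = m - 1 ↔ i + 1 = 0 := by
  haveI : NeZero m := ⟨by omega⟩
  obtain ⟨k, rfl⟩ : ∃ k, m = k + 3 := ⟨m - 3, by omega⟩
  have h2 : (-1 : ZMod (k+3)).val = k + 2 := ZMod.val_neg_one _
  constructor
  · intro h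
    have : i = -1 := ZMod.val_injective _ (by rw [h, h2]; omega)
    rw [this]; ring
  · intro h
    have : i = -1 := by linear_combination h
    rw [this, h2]; omega

lemma valSucc {m : ℕ} (hm : 3 ≤ m) (i : ZMod m) (h : i.val ≠ m - 1) :
    (i + 1).val = i.val + 1 := by
  haveI : NeZero m := ⟨by omega⟩
  haveI : Fact (1 < m) := ⟨by omega⟩
  have hl := ZMod.val_lt i
  rw [ZMod.val_add, ZMod.val_one, Nat.mod_eq_of_lt (by omega)]

lemma perm_rel_back {α : Type*} [Finite α] (e : Equiv.Perm α) (R : α → α → Prop)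
    (h : ∀ u v, R u v → R (e u) (e v)) : ∀ u v, R (e u) (e v) → R u v := by
  have hk : ∀ (k : ℕ) (u v : α), R u v → R ((e ^ k) u) ((e ^ k) v) := by
    intro k
    induction k with
    | zero => simp
    | succ k ih =>
      intro u v huv
      have := h _ _ (ih u v huv)
      simpa [pow_succ', Equiv.Perm.mul_apply] using this
  intro u v huv
  have hpos : 0 < orderOf e := orderOf_pos e
  have h2 := hk (orderOf e - 1) (e u) (e v) huv
  rw [← Equiv.Perm.mul_apply, ← Equiv.Perm.mul_apply, ← pow_succ,
    show orderOf e - 1 + 1 = orderOf e from by omega, pow_orderOf_eq_one] at h2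
  simpa using h2

theorem stmt_13 (m n : ℕ) (hm : 3 ≤ m) (hn : 3 ≤ n) (r : (ZMod n)ˣ)
    (hr : (r : ZMod n) ^ m = 1) (t : ZMod n) (ht : t * ((r : ZMod n) - 1) = 0) :
    ∃ φ : Ygraph m n (r : ZMod n) t ≃g Ygraph m n (r : ZMod n) t,
      ∀ p : ZMod m × ZMod n,
        φ p = if p.1.val ≠ m - 1 then (p.1 + 1, (r : ZMod n) * p.2)
              else (0, (r : ZMod n) * p.2 + t) := by
  haveI : NeZero m := ⟨by omega⟩
  haveI : NeZero n := ⟨by omega⟩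
  set R : ZMod n := (r : ZMod n) with hR
  have hrt : R * t = t := by linear_combination ht
  have hrm1 : R * R ^ (m - 1) = 1 := by
    rw [mul_comm, ← pow_succ, show m - 1 + 1 = m from by omega]; exact hr
  have hzval : (0 : ZMod m).val ≠ m - 1 := by
    rw [ZMod.val_zero]; omega
  have hcancel : ∀ b c : ZMod n, R * b = R * c → b = c := by
    intro b c h
    have := congrArg (fun x => ((r⁻¹ : (ZMod n)ˣ) : ZMod n) * x) h
    simpa [hR, ← mul_assoc] using this
  set f : ZMod m × ZMod n → ZMod m × ZMod n :=
    fun p => if p.1.val ≠ m - 1 then (p.1 + 1, R * p.2) else (0, R * p.2 + t) with hf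
  have hfA : ∀ (a : ZMod m) (b : ZMod n), a.val ≠ m - 1 → f (a, b) = (a + 1, R * b) := by
    intro a b ha; simp [hf, ha]
  have hfB : ∀ (a : ZMod m) (b : ZMod n), a.val = m - 1 → f (a, b) = (0, R * b + t) := by
    intro a b ha; simp [hf, ha]
  -- injectivity
  have hinj : Function.Injective f := by
    rintro ⟨a, b⟩ ⟨c, d⟩ hpq
    by_cases ha : a.val = m - 1 <;> by_cases hc : c.val = m - 1
    · rw [hfB a b ha, hfB c d hc, Prod.ext_iff] at hpq
      have : b = d := hcancel _ _ (by linear_combination hpq.2)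
      have hac : a = c := ZMod.val_injective _ (ha.trans hc.symm)
      rw [hac, this]
    · rw [hfB a b ha, hfA c d hc, Prod.ext_iff] at hpq
      exact absurd ((valEqIff hm c).mpr hpq.1.symm) hc
    · rw [hfA a b ha, hfB c d hc, Prod.ext_iff] at hpq
      exact absurd ((valEqIff hm a).mpr hpq.1) ha
    · rw [hfA a b ha, hfA c d hc, Prod.ext_iff] at hpq
      have h1 : a = c := by have := hpq.1; dsimp at this; linear_combination this
      have : b = d := hcancel _ _ hpq.2
      rw [h1, this]
  have hbij := (Finite.injective_iff_bijective).mp hinj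
  -- forward preservation of Yrel
  have key : ∀ u v, Yrel m n R t u v → Yrel m n R t (f u) (f v) := by
    rintro ⟨a, b⟩ ⟨c, d⟩ h
    rcases h with ⟨h1, h2⟩ | ⟨h1, h2, h3⟩ | ⟨h1, h2, h3⟩
    · have hv : (c, d) = (a, b + R ^ a.val) := Prod.ext_iff.mpr ⟨h1, h2⟩
      rw [hv]
      by_cases ha : a.val = m - 1
      · rw [hfB _ _ ha, hfB _ _ ha]
        left
        refine ⟨rfl, ?_⟩
        dsimp
        rw [ZMod.val_zero, pow_zero, ha]
        calc R * (b + R ^ (m-1)) + t = R * b + t + R * R ^ (m-1) := by ring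
          _ = R * b + t + 1 := by rw [hrm1]
      · rw [hfA _ _ ha, hfA _ _ ha]
        left
        refine ⟨rfl, ?_⟩
        dsimp
        rw [valSucc hm a ha, pow_succ]
        ring
    · have hv : (c, d) = (a + 1, b) := Prod.ext_iff.mpr ⟨h2, h3⟩
      rw [hv]
      by_cases hb : (a + 1).val = m - 1
      · rw [hfA _ _ h1, hfB _ _ hb]
        right; right
        exact ⟨hb, rfl, rfl⟩
      · rw [hfA _ _ h1, hfA _ _ hb]
        right; left
        exact ⟨hb, rfl, rfl⟩
    · have hv : (c, d) = (0, b + t) := Prod.ext_iff.mpr ⟨h2, h3⟩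
      rw [hv]
      rw [hfB _ _ h1, hfA _ _ hzval]
      right; left
      refine ⟨hzval, by dsimp, ?_⟩
      dsimp; rw [mul_add, hrt]
  set e : Equiv.Perm (ZMod m × ZMod n) := Equiv.ofBijective f hbij with he
  have efeq : ∀ p, e p = f p := fun p => rfl
  have keyS : ∀ u v, (Yrel m n R t u v ∨ Yrel m n R t v u) →
      (Yrel m n R t (e u) (e v) ∨ Yrel m n R t (e v) (e u)) := by
    rintro u v (h | h)
    · left; rw [efeq, efeq]; exact key u v h
    · right; rw [efeq, efeq]; exact key v u h
  have back := perm_rel_back e _ keyS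
  refine ⟨⟨e, ?_⟩, fun p => rfl⟩
  intro u v
  show (Ygraph m n R t).Adj (e u) (e v) ↔ (Ygraph m n R t).Adj u v
  simp only [Ygraph, SimpleGraph.fromRel_adj]
  constructor
  · rintro ⟨hne, h⟩
    exact ⟨fun hh => hne (by rw [hh]), back u v h⟩
  · rintro ⟨hne, h⟩
    exact ⟨fun hh => hne (e.injective hh), keyS u v h⟩
end

section
/- Let m ≥ 3, n ≥ 3, r ∈ (ℤ/nℤ)* with r^m = 1, and t ∈ ℤ/nℤ with t(r-1) = 0. In the graph Y(m,n;r,t) defined on vertex set ℤ/mℤ × ℤ/nℤ as above, the map ρ(i,j) = (i, j+1) is an automorphism, and the group generated by ρ and the automorphism σ (where σ(i,j) = (i+1,rj) for i ≠ m-1 and σ(m-1,j) = (0,rj+t)) acts transitively on the vertex set. -/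
/-- The underlying map of `σ`. -/
def sigmaFun (m n : ℕ) (r t : ZMod n) (p : ZMod m × ZMod n) : ZMod m × ZMod n :=
  if p.1.val ≠ m - 1 then (p.1 + 1, r * p.2) else (0, r * p.2 + t)

section aux

variable {m : ℕ} [NeZero m]

omit [NeZero m] in
lemma Yaux.cast_sub_one (hm : 1 ≤ m) : (((m - 1 : ℕ) : ZMod m)) = -1 := by
  have h : ((m - 1 : ℕ) : ZMod m) = (m : ZMod m) - 1 := by
    have e : (m - 1) + 1 = m := by omega
    calc ((m - 1 : ℕ) : ZMod m) = (((m - 1) + 1 : ℕ) : ZMod m) - 1 := by push_cast; ring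
    _ = (m : ZMod m) - 1 := by rw [e]
  rw [h, ZMod.natCast_self]; ring

lemma Yaux.val_eq_iff (hm : 1 ≤ m) (i : ZMod m) : i.val = m - 1 ↔ i = -1 := by
  constructor
  · intro h
    have hi : i = ((i.val : ℕ) : ZMod m) := by
      rw [ZMod.natCast_val, ZMod.cast_id]
    rw [hi, h, Yaux.cast_sub_one hm]
  · rintro rfl
    rw [← Yaux.cast_sub_one hm, ZMod.val_cast_of_lt (by omega)]

lemma Yaux.val_succ (i : ZMod m) (h : i.val ≠ m - 1) : (i + 1).val = i.val + 1 := by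
  have hv := ZMod.val_lt i
  have hm : 1 ≤ m := Nat.one_le_iff_ne_zero.mpr (NeZero.ne m)
  have e : (i + 1 : ZMod m) = ((i.val + 1 : ℕ) : ZMod m) := by
    push_cast [ZMod.natCast_val, ZMod.cast_id]
    ring
  rw [e, ZMod.val_cast_of_lt (by omega)]

end aux

section main

variable {m n : ℕ} [NeZero m] [NeZero n]

omit [NeZero n] in
lemma Yaux.sigma_fst (hm : 3 ≤ m) (r t : ZMod n) (p : ZMod m × ZMod n) :
    (sigmaFun m n r t p).1 = p.1 + 1 := by
  unfold sigmaFun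
  by_cases h : p.1.val = m - 1
  · have h1 : p.1 = -1 := (Yaux.val_eq_iff (by omega) p.1).mp h
    rw [if_neg (by simp [h])]
    rw [h1]; ring
  · rw [if_pos h]

omit [NeZero n] in
lemma Yaux.sigma_inj (hm : 3 ≤ m) (r : (ZMod n)ˣ) (t : ZMod n) :
    Function.Injective (sigmaFun m n (r : ZMod n) t) := by
  intro p q h
  have h1m : (1:ℕ) ≤ m := by omega
  unfold sigmaFun at h
  by_cases hp : p.1.val = m - 1 <;> by_cases hq : q.1.val = m - 1
  · rw [if_neg (by simp [hp]), if_neg (by simp [hq]), Prod.mk.injEq] at h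
    have e2 : p.2 = q.2 := (Units.mul_right_inj r).mp (by linear_combination h.2)
    have e1 : p.1 = q.1 := by
      rw [(Yaux.val_eq_iff h1m p.1).mp hp, (Yaux.val_eq_iff h1m q.1).mp hq]
    exact Prod.ext e1 e2
  · rw [if_neg (by simp [hp]), if_pos hq, Prod.mk.injEq] at h
    exact absurd ((Yaux.val_eq_iff h1m q.1).mpr (by linear_combination -h.1)) hq
  · rw [if_pos hp, if_neg (by simp [hq]), Prod.mk.injEq] at h
    exact absurd ((Yaux.val_eq_iff h1m p.1).mpr (by linear_combination h.1)) hp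
  · rw [if_pos hp, if_pos hq, Prod.mk.injEq] at h
    exact Prod.ext (by linear_combination h.1) ((Units.mul_right_inj r).mp h.2)

lemma Yaux.yrel_iff (hm : 3 ≤ m) (r : (ZMod n)ˣ) (hr : (r : ZMod n) ^ m = 1)
    (t : ZMod n) (ht : (r : ZMod n) * t = t) (u v : ZMod m × ZMod n) :
    Yrel m n (r : ZMod n) t u v ↔
      Yrel m n (r : ZMod n) t (sigmaFun m n (r : ZMod n) t u)
        (sigmaFun m n (r : ZMod n) t v) := by
  have h1m : (1 : ℕ) ≤ m := by omega
  have hval0 : (0 : ZMod m).val = 0 := ZMod.val_zero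
  have h0ne : (0 : ZMod m).val ≠ m - 1 := by omega
  have hone : (0 : ZMod m) ≠ 1 := by
    intro h
    have h1 := ZMod.val_cast_of_lt (show 1 < m by omega)
    rw [Nat.cast_one] at h1
    rw [← h, hval0] at h1
    omega
  have hneg : (-1 : ZMod m) ≠ 0 := by
    intro h
    have h2 := (Yaux.val_eq_iff h1m (-1 : ZMod m)).mpr rfl
    rw [h, hval0] at h2
    omega
  have hrm1 : (r : ZMod n) * (r : ZMod n) ^ (m - 1) = 1 := by
    rw [← pow_succ']
    have e : m - 1 + 1 = m := by omega
    rw [e, hr]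
  by_cases hu : u.1.val = m - 1 <;> by_cases hv : v.1.val = m - 1
  · -- Case 1 : both in last row
    have hu1 : u.1 = -1 := (Yaux.val_eq_iff h1m u.1).mp hu
    have hv1 : v.1 = -1 := (Yaux.val_eq_iff h1m v.1).mp hv
    have su : sigmaFun m n (r : ZMod n) t u = (0, (r : ZMod n) * u.2 + t) := by
      unfold sigmaFun; rw [if_neg (by simp [hu])]
    have sv : sigmaFun m n (r : ZMod n) t v = (0, (r : ZMod n) * v.2 + t) := by
      unfold sigmaFun; rw [if_neg (by simp [hv])]
    rw [su, sv]
    unfold Yrel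
    dsimp only
    constructor
    · rintro (⟨h1, h2⟩ | ⟨h0, h1, h2⟩ | ⟨h0, h1, h2⟩)
      · refine Or.inl ⟨rfl, ?_⟩
        rw [hval0, pow_zero]
        rw [hu] at h2
        linear_combination (r : ZMod n) * h2 + hrm1
      · exact absurd hu h0
      · exact absurd (hv1.symm.trans h1) hneg
    · rintro (⟨h1, h2⟩ | ⟨h0, h1, h2⟩ | ⟨h0, h1, h2⟩)
      · refine Or.inl ⟨hv1.trans hu1.symm, ?_⟩
        rw [hu]
        rw [hval0, pow_zero] at h2
        exact (Units.mul_right_inj r).mp (by linear_combination h2 - hrm1)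
      · exact absurd (by simpa using h1) hone
      · exact absurd h0 h0ne
  · -- Case 2 : u in last row, v not
    have hu1 : u.1 = -1 := (Yaux.val_eq_iff h1m u.1).mp hu
    have su : sigmaFun m n (r : ZMod n) t u = (0, (r : ZMod n) * u.2 + t) := by
      unfold sigmaFun; rw [if_neg (by simp [hu])]
    have sv : sigmaFun m n (r : ZMod n) t v = (v.1 + 1, (r : ZMod n) * v.2) := by
      unfold sigmaFun; rw [if_pos hv]
    rw [su, sv]
    unfold Yrel
    dsimp only
    constructor
    · rintro (⟨h1, h2⟩ | ⟨h0, h1, h2⟩ | ⟨h0, h1, h2⟩)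
      · exact absurd ((Yaux.val_eq_iff h1m v.1).mpr (h1.trans hu1)) hv
      · exact absurd hu h0
      · refine Or.inr (Or.inl ⟨h0ne, by rw [h1], ?_⟩)
        linear_combination (r : ZMod n) * h2 + ht
    · rintro (⟨h1, h2⟩ | ⟨h0, h1, h2⟩ | ⟨h0, h1, h2⟩)
      · exact absurd ((Yaux.val_eq_iff h1m v.1).mpr (by linear_combination h1)) hv
      · refine Or.inr (Or.inr ⟨hu, by linear_combination h1, ?_⟩)
        exact (Units.mul_right_inj r).mp (by linear_combination h2 - ht)
      · exact absurd h0 h0ne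
  · -- Case 3 : v in last row, u not
    have hv1 : v.1 = -1 := (Yaux.val_eq_iff h1m v.1).mp hv
    have hus : (u.1 + 1).val = u.1.val + 1 := Yaux.val_succ u.1 hu
    have su : sigmaFun m n (r : ZMod n) t u = (u.1 + 1, (r : ZMod n) * u.2) := by
      unfold sigmaFun; rw [if_pos hu]
    have sv : sigmaFun m n (r : ZMod n) t v = (0, (r : ZMod n) * v.2 + t) := by
      unfold sigmaFun; rw [if_neg (by simp [hv])]
    rw [su, sv]
    unfold Yrel
    dsimp only
    constructor
    · rintro (⟨h1, h2⟩ | ⟨h0, h1, h2⟩ | ⟨h0, h1, h2⟩)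
      · exact absurd (by rw [← h1]; exact hv) hu
      · refine Or.inr (Or.inr ⟨by rw [← h1]; exact hv, rfl, by rw [h2]⟩)
      · exact absurd h0 hu
    · rintro (⟨h1, h2⟩ | ⟨h0, h1, h2⟩ | ⟨h0, h1, h2⟩)
      · exact absurd ((Yaux.val_eq_iff h1m u.1).mpr (by linear_combination -h1)) hu
      · exact absurd ((Yaux.val_eq_iff h1m (u.1 + 1)).mpr (by linear_combination -h1)) h0
      · refine Or.inr (Or.inl ⟨hu, ?_, ?_⟩)
        · rw [hv1, ← (Yaux.val_eq_iff h1m (u.1 + 1)).mp h0]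
        · exact (Units.mul_right_inj r).mp (by linear_combination h2)
  · -- Case 4 : neither in last row
    have hus : (u.1 + 1).val = u.1.val + 1 := Yaux.val_succ u.1 hu
    have su : sigmaFun m n (r : ZMod n) t u = (u.1 + 1, (r : ZMod n) * u.2) := by
      unfold sigmaFun; rw [if_pos hu]
    have sv : sigmaFun m n (r : ZMod n) t v = (v.1 + 1, (r : ZMod n) * v.2) := by
      unfold sigmaFun; rw [if_pos hv]
    rw [su, sv]
    unfold Yrel
    dsimp only
    constructor
    · rintro (⟨h1, h2⟩ | ⟨h0, h1, h2⟩ | ⟨h0, h1, h2⟩)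
      · refine Or.inl ⟨by rw [h1], ?_⟩
        rw [hus, pow_succ, h2]
        ring
      · exact Or.inr (Or.inl ⟨by rw [← h1]; exact hv, by rw [h1], by rw [h2]⟩)
      · exact absurd h0 hu
    · rintro (⟨h1, h2⟩ | ⟨h0, h1, h2⟩ | ⟨h0, h1, h2⟩)
      · refine Or.inl ⟨by linear_combination h1, ?_⟩
        rw [hus, pow_succ] at h2
        exact (Units.mul_right_inj r).mp (by linear_combination h2)
      · exact Or.inr (Or.inl ⟨hu, by linear_combination h1,
          (Units.mul_right_inj r).mp h2⟩)
      · exact absurd ((Yaux.val_eq_iff h1m v.1).mpr (by linear_combination h1)) hv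

end main

theorem stmt_14 (m n : ℕ) (hm : 3 ≤ m) (hn : 3 ≤ n) (r : (ZMod n)ˣ)
    (hr : (r : ZMod n) ^ m = 1) (t : ZMod n) (ht : t * ((r : ZMod n) - 1) = 0) :
    ∃ (ρφ σφ : Ygraph m n (r : ZMod n) t ≃g Ygraph m n (r : ZMod n) t),
      (∀ p : ZMod m × ZMod n, ρφ p = (p.1, p.2 + 1)) ∧
      (∀ p : ZMod m × ZMod n,
        σφ p = if p.1.val ≠ m - 1 then (p.1 + 1, (r : ZMod n) * p.2)
               else (0, (r : ZMod n) * p.2 + t)) ∧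
      (∀ u v : ZMod m × ZMod n,
        ∃ g ∈ Subgroup.closure
            ({ρφ.toEquiv, σφ.toEquiv} : Set (Equiv.Perm (ZMod m × ZMod n))),
          g u = v) := by
  haveI : NeZero m := ⟨by omega⟩
  haveI : NeZero n := ⟨by omega⟩
  have ht' : (r : ZMod n) * t = t := by linear_combination ht
  -- ρ
  let ρe : Equiv.Perm (ZMod m × ZMod n) :=
    Equiv.prodCongr (Equiv.refl (ZMod m)) (Equiv.addRight (1 : ZMod n))
  have hρe : ∀ p : ZMod m × ZMod n, ρe p = (p.1, p.2 + 1) := fun p => rfl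
  have hρrel : ∀ u v : ZMod m × ZMod n,
      Yrel m n (r : ZMod n) t u v ↔ Yrel m n (r : ZMod n) t (ρe u) (ρe v) := by
    intro u v
    rw [hρe, hρe]
    unfold Yrel
    dsimp only
    constructor
    · rintro (⟨h1, h2⟩ | ⟨h0, h1, h2⟩ | ⟨h0, h1, h2⟩)
      · exact Or.inl ⟨h1, by rw [h2]; ring⟩
      · exact Or.inr (Or.inl ⟨h0, h1, by rw [h2]⟩)
      · exact Or.inr (Or.inr ⟨h0, h1, by rw [h2]; ring⟩)
    · rintro (⟨h1, h2⟩ | ⟨h0, h1, h2⟩ | ⟨h0, h1, h2⟩)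
      · exact Or.inl ⟨h1, by linear_combination h2⟩
      · exact Or.inr (Or.inl ⟨h0, h1, by linear_combination h2⟩)
      · exact Or.inr (Or.inr ⟨h0, h1, by linear_combination h2⟩)
  let ρφ : Ygraph m n (r : ZMod n) t ≃g Ygraph m n (r : ZMod n) t :=
    ⟨ρe, by
      intro a b
      show (Ygraph m n (r : ZMod n) t).Adj (ρe a) (ρe b) ↔
        (Ygraph m n (r : ZMod n) t).Adj a b
      rw [Ygraph, SimpleGraph.fromRel_adj, SimpleGraph.fromRel_adj]
      constructor
      · rintro ⟨hne, h⟩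
        refine ⟨fun e => hne (by rw [e]), ?_⟩
        rcases h with h | h
        · exact Or.inl ((hρrel a b).mpr h)
        · exact Or.inr ((hρrel b a).mpr h)
      · rintro ⟨hne, h⟩
        refine ⟨fun e => hne (ρe.injective e), ?_⟩
        rcases h with h | h
        · exact Or.inl ((hρrel a b).mp h)
        · exact Or.inr ((hρrel b a).mp h)⟩
  -- σ
  have hσinj := Yaux.sigma_inj (m := m) (n := n) hm r t
  let σe : Equiv.Perm (ZMod m × ZMod n) :=
    Equiv.ofBijective (sigmaFun m n (r : ZMod n) t)
      ⟨hσinj, Finite.injective_iff_surjective.mp hσinj⟩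
  have hσe : ∀ p : ZMod m × ZMod n, σe p = sigmaFun m n (r : ZMod n) t p := fun p => rfl
  have hσrel := Yaux.yrel_iff (m := m) (n := n) hm r hr t ht'
  let σφ : Ygraph m n (r : ZMod n) t ≃g Ygraph m n (r : ZMod n) t :=
    ⟨σe, by
      intro a b
      show (Ygraph m n (r : ZMod n) t).Adj (σe a) (σe b) ↔
        (Ygraph m n (r : ZMod n) t).Adj a b
      rw [Ygraph, SimpleGraph.fromRel_adj, SimpleGraph.fromRel_adj]
      constructor
      · rintro ⟨hne, h⟩
        refine ⟨fun e => hne (by rw [e]), ?_⟩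
        rcases h with h | h
        · exact Or.inl ((hσrel a b).mpr h)
        · exact Or.inr ((hσrel b a).mpr h)
      · rintro ⟨hne, h⟩
        refine ⟨fun e => hne (σe.injective e), ?_⟩
        rcases h with h | h
        · exact Or.inl ((hσrel a b).mp h)
        · exact Or.inr ((hσrel b a).mp h)⟩
  refine ⟨ρφ, σφ, fun p => rfl, fun p => ?_, ?_⟩
  · show σe p = _
    rw [hσe]
    rfl
  -- transitivity
  have hσpow : ∀ (a : ℕ) (p : ZMod m × ZMod n),
      ((σφ.toEquiv ^ a) p).1 = p.1 + (a : ZMod m) := by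
    intro a
    induction a with
    | zero => intro p; simp
    | succ k ih =>
      intro p
      rw [pow_succ, Equiv.Perm.mul_apply]
      have hfst : (σφ.toEquiv p).1 = p.1 + 1 := by
        rw [show σφ.toEquiv p = sigmaFun m n (r : ZMod n) t p from rfl]
        exact Yaux.sigma_fst hm _ _ p
      rw [ih (σφ.toEquiv p), hfst]
      push_cast
      ring
  have hρpow : ∀ (b : ℕ) (p : ZMod m × ZMod n),
      ((ρφ.toEquiv ^ b) p) = (p.1, p.2 + (b : ZMod n)) := by
    intro b
    induction b with
    | zero => intro p; simp
    | succ k ih =>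
      intro p
      rw [pow_succ, Equiv.Perm.mul_apply,
        show ρφ.toEquiv p = (p.1, p.2 + 1) from rfl, ih]
      rw [Prod.mk.injEq]
      refine ⟨rfl, ?_⟩
      push_cast
      ring
  intro u v
  set a : ℕ := (v.1 - u.1).val with ha
  set w : ZMod m × ZMod n := (σφ.toEquiv ^ a) u with hw
  have hw1 : w.1 = v.1 := by
    rw [hw, hσpow a u, ha, ZMod.natCast_val, ZMod.cast_id]
    ring
  set b : ℕ := (v.2 - w.2).val with hb
  refine ⟨ρφ.toEquiv ^ b * σφ.toEquiv ^ a, ?_, ?_⟩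
  · apply Subgroup.mul_mem
    · exact Subgroup.pow_mem _ (Subgroup.subset_closure (by simp)) b
    · exact Subgroup.pow_mem _ (Subgroup.subset_closure (by simp)) a
  · rw [Equiv.Perm.mul_apply, ← hw, hρpow b w, hw1, hb, ZMod.natCast_val, ZMod.cast_id]
    rw [Prod.mk.injEq]
    exact ⟨rfl, by ring⟩
end

section
/- Let n = 16n₁ for a positive integer n₁, and let r ∈ ℤ/nℤ satisfy 2(r-1) = n/2 and either r-1 = n/4 or r-1 = 3n/4 (as elements of ℤ/nℤ). Suppose further that there exists a' ∈ {0,...,4n₁-1} with a'·4 = -(r-1) and a'·t = r-1 in ℤ/nℤ, where t = n/2 + 4. Then 8n₁² = 8n₁ in ℤ/nℤ, i.e. n divides 8n₁² - 8n₁, and hence n₁ is odd. -/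
theorem stmt_18 (n₁ : ℕ) (hn₁ : 0 < n₁) (r : ZMod (16 * n₁))
    (h2r : 2 * (r - 1) = ((8 * n₁ : ℕ) : ZMod (16 * n₁)))
    (hr : r - 1 = ((4 * n₁ : ℕ) : ZMod (16 * n₁)) ∨
          r - 1 = ((12 * n₁ : ℕ) : ZMod (16 * n₁)))
    (ha : ∃ a' : ℕ, a' < 4 * n₁ ∧
      (a' : ZMod (16 * n₁)) * 4 = -(r - 1) ∧
      (a' : ZMod (16 * n₁)) * (((8 * n₁ + 4 : ℕ)) : ZMod (16 * n₁)) = r - 1) :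
    ((8 * n₁ ^ 2 : ℕ) : ZMod (16 * n₁)) = ((8 * n₁ : ℕ) : ZMod (16 * n₁)) ∧
      Odd n₁ := by
  obtain ⟨a', _, h1, h2⟩ := ha
  have hz : ((16 * n₁ : ℕ) : ZMod (16 * n₁)) = 0 := ZMod.natCast_self _
  have key : (a' : ZMod (16 * n₁)) * ((8 * n₁ : ℕ) : ZMod (16 * n₁))
      = ((8 * n₁ : ℕ) : ZMod (16 * n₁)) := by
    calc (a' : ZMod (16 * n₁)) * ((8 * n₁ : ℕ) : ZMod (16 * n₁))
        = (a' : ZMod (16 * n₁)) * (((8 * n₁ + 4 : ℕ)) : ZMod (16 * n₁))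
          - (a' : ZMod (16 * n₁)) * 4 := by push_cast; ring
      _ = (r - 1) - (-(r - 1)) := by rw [h1, h2]
      _ = 2 * (r - 1) := by ring
      _ = ((8 * n₁ : ℕ) : ZMod (16 * n₁)) := h2r
  have main : ((8 * n₁ ^ 2 : ℕ) : ZMod (16 * n₁)) = ((8 * n₁ : ℕ) : ZMod (16 * n₁)) := by
    push_cast at hz key h1 ⊢
    rcases hr with h | h <;> rw [h] at h1 <;> push_cast at h1 <;>
      have h1' := congrArg (· * ((2 * n₁ : ℕ) : ZMod (16 * n₁))) h1 <;>
      push_cast at h1'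
    · linear_combination h1' - key - hz
    · linear_combination -h1' - key + ((a' : ZMod (16 * n₁)) + 2 * n₁ - 1) * hz
  refine ⟨main, ?_⟩
  have hm : 8 * n₁ ^ 2 ≡ 8 * n₁ [MOD 16 * n₁] := (ZMod.natCast_eq_natCast_iff _ _ _).mp main
  have hdvd : (16 * n₁ : ℤ) ∣ ((8 * n₁ : ℕ) : ℤ) - ((8 * n₁ ^ 2 : ℕ) : ℤ) := by
    exact_mod_cast hm.dvd
  obtain ⟨k, hk⟩ := hdvd
  have hcancel : (1 : ℤ) - n₁ = 2 * k := by
    have h8 : (8 * n₁ : ℤ) ≠ 0 := by positivity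
    have : (8 * n₁ : ℤ) * ((1 : ℤ) - n₁) = (8 * n₁ : ℤ) * (2 * k) := by
      push_cast at hk ⊢; linarith [hk]
    exact mul_left_cancel₀ h8 this
  rw [Nat.odd_iff]
  omega
end
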